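/- arXiv:1005.1260 — 7 statements merged into one kernel-verified Lean document; each statement's English description precedes it below -/
import Mathlib

section
/- For every real number q ≥ 2, the gamma function satisfies Γ((q+1)/2) ≤ (q/4)^{q/2} · √π. -/
/-!
With `u = q / 2` the claim reads `log Γ(u + 1/2) ≤ u log (u/2) + (log π)/2` for `u ≥ 1`, with
equality at `u = 1`. Going from `u` to `u + 1` the left side grows by exactly `log (u + 1/2)` and
the right side by at least that much, so it suffices to treat `u ∈ [1, 2]`. There the
log-convexity of `Γ` bounds `log Γ(u + 1/2)` by the chords through `Γ(3/2) = √π/2`, `Γ(2) = 1`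
and `Γ(5/2) = 3√π/4`, and what is left follows from the tangent-line bounds of `u log u` at
`1` and `3/2` together with the numerical facts `8 ≤ eπ`, `3π ≤ 4e` and `64 ≤ 27π`.
-/

open Real Set

lemma sub_add_mul_log_le_mul_log {a u : ℝ} (ha : 0 < a) (hu : 0 < u) :
    u - a + u * log a ≤ u * log u := by
  have h := one_sub_inv_le_log_of_pos (div_pos hu ha)
  rw [inv_div, log_div hu.ne' ha.ne'] at h
  have h' := mul_le_mul_of_nonneg_left h hu.le
  rw [mul_sub, mul_one, mul_div_cancel₀ _ hu.ne'] at h'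
  linarith

lemma three_mul_log_two_sub_log_pi_le_one : 3 * log 2 - log π ≤ 1 := by
  have h : log (2 ^ 3) ≤ log (exp 1 * π) :=
    log_le_log (by norm_num) (by nlinarith [exp_one_gt_d9, pi_gt_three])
  rw [log_mul (exp_pos 1).ne' pi_ne_zero, log_exp, log_pow] at h
  push_cast at h
  linarith

lemma log_three_add_log_pi_sub_two_mul_log_two_le_one : log 3 + log π - 2 * log 2 ≤ 1 := by
  have h : log (3 * π) ≤ log (exp 1 * 2 ^ 2) :=
    log_le_log (by positivity) (by nlinarith [exp_one_gt_d9, pi_lt_d2])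
  rw [log_mul (by norm_num) pi_ne_zero, log_mul (exp_pos 1).ne' (by norm_num), log_exp,
    log_pow] at h
  push_cast at h
  linarith

lemma six_mul_log_two_le_three_mul_log_three_add_log_pi : 6 * log 2 ≤ 3 * log 3 + log π := by
  have h : log (2 ^ 6) ≤ log (3 ^ 3 * π) :=
    log_le_log (by norm_num) (by nlinarith [pi_gt_three])
  rw [log_mul (by norm_num) pi_ne_zero, log_pow, log_pow] at h
  push_cast at h
  linarith

lemma log_Gamma_three_halves : log (Gamma (3 / 2)) = log π / 2 - log 2 := by
  have h := Gamma_nat_add_half 1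
  norm_num at h
  rw [h, log_div (by positivity) two_ne_zero, log_sqrt pi_pos.le]

lemma log_Gamma_five_halves : log (Gamma (5 / 2)) = log 3 + log π / 2 - 2 * log 2 := by
  have h := Gamma_nat_add_half 2
  norm_num [Nat.doubleFactorial] at h
  rw [h, log_div (by positivity) (by norm_num), log_mul (by norm_num) (by positivity),
    log_sqrt pi_pos.le, show (4 : ℝ) = 2 ^ 2 by norm_num, log_pow]
  push_cast
  ring

lemma log_Gamma_add_half_le_of_mem_Icc_one_three_halves {u : ℝ} (hu : u ∈ Icc 1 (3 / 2)) :
    log (Gamma (u + 1 / 2)) ≤ u * log (u / 2) + log π / 2 := by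
  obtain ⟨hu₁, hu₂⟩ := hu
  have hchord := convexOn_log_Gamma.2 (mem_Ioi.2 (by norm_num : (0 : ℝ) < 3 / 2))
    (mem_Ioi.2 two_pos) (by linarith : 0 ≤ 3 - 2 * u) (by linarith : 0 ≤ 2 * u - 2) (by ring)
  have htangent := sub_add_mul_log_le_mul_log one_pos (by linarith : 0 < u)
  rw [log_one] at htangent
  calc log (Gamma (u + 1 / 2))
      = log (Gamma ((3 - 2 * u) • (3 / 2) + (2 * u - 2) • 2)) := by
        simp only [smul_eq_mul]; ring_nf
    _ ≤ (3 - 2 * u) * log (Gamma (3 / 2)) + (2 * u - 2) * log (Gamma 2) := hchord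
    _ ≤ u * log (u / 2) + log π / 2 := by
      rw [log_Gamma_three_halves, Gamma_two, log_one, log_div (by linarith) two_ne_zero]
      nlinarith [three_mul_log_two_sub_log_pi_le_one]

lemma log_Gamma_add_half_le_of_mem_Icc_three_halves_two {u : ℝ} (hu : u ∈ Icc (3 / 2) 2) :
    log (Gamma (u + 1 / 2)) ≤ u * log (u / 2) + log π / 2 := by
  obtain ⟨hu₁, hu₂⟩ := hu
  have hchord := convexOn_log_Gamma.2 (mem_Ioi.2 two_pos)
    (mem_Ioi.2 (by norm_num : (0 : ℝ) < 5 / 2)) (by linarith : 0 ≤ 4 - 2 * u)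
    (by linarith : 0 ≤ 2 * u - 3) (by ring)
  have htangent := sub_add_mul_log_le_mul_log (by norm_num : (0 : ℝ) < 3 / 2)
    (by linarith : 0 < u)
  rw [log_div (by norm_num) two_ne_zero] at htangent
  calc log (Gamma (u + 1 / 2))
      = log (Gamma ((4 - 2 * u) • 2 + (2 * u - 3) • (5 / 2))) := by
        simp only [smul_eq_mul]; ring_nf
    _ ≤ (4 - 2 * u) * log (Gamma 2) + (2 * u - 3) * log (Gamma (5 / 2)) := hchord
    _ ≤ u * log (u / 2) + log π / 2 := by
      rw [log_Gamma_five_halves, Gamma_two, log_one, log_div (by linarith) two_ne_zero]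
      nlinarith [log_three_add_log_pi_sub_two_mul_log_two_le_one,
        six_mul_log_two_le_three_mul_log_three_add_log_pi]

lemma log_Gamma_add_half_le_of_mem_Icc {u : ℝ} (hu : u ∈ Icc 1 2) :
    log (Gamma (u + 1 / 2)) ≤ u * log (u / 2) + log π / 2 := by
  rcases le_total u (3 / 2) with h | h
  · exact log_Gamma_add_half_le_of_mem_Icc_one_three_halves ⟨hu.1, h⟩
  · exact log_Gamma_add_half_le_of_mem_Icc_three_halves_two ⟨h, hu.2⟩

lemma log_add_half_add_mul_log_half_le {u : ℝ} (hu : 0 < u) :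
    log (u + 1 / 2) + u * log (u / 2) ≤ (u + 1) * log ((u + 1) / 2) := by
  have hlower : u / (u + 1) ≤ u * (log (u + 1) - log u) := by
    have h := one_sub_inv_le_log_of_pos (show 0 < (u + 1) / u by positivity)
    rw [inv_div, log_div (by positivity) hu.ne'] at h
    calc u / (u + 1) = u * (1 - u / (u + 1)) := by field_simp; ring
      _ ≤ _ := mul_le_mul_of_nonneg_left h hu.le
  have hupper : log (2 * u + 1) - log (u + 1) ≤ u / (u + 1) := by
    have h := log_le_sub_one_of_pos (show 0 < (2 * u + 1) / (u + 1) by positivity)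
    rw [log_div (by positivity) (by positivity)] at h
    calc _ ≤ _ := h
      _ = u / (u + 1) := by field_simp; ring
  rw [show u + 1 / 2 = (2 * u + 1) / 2 by ring, log_div (by positivity) two_ne_zero,
    log_div hu.ne' two_ne_zero, log_div (by positivity) two_ne_zero]
  linarith

lemma log_Gamma_add_one_add_half_le {u : ℝ} (hu : 0 < u)
    (h : log (Gamma (u + 1 / 2)) ≤ u * log (u / 2) + log π / 2) :
    log (Gamma (u + 1 + 1 / 2)) ≤ (u + 1) * log ((u + 1) / 2) + log π / 2 := by
  rw [add_right_comm, Gamma_add_one (by positivity),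
    log_mul (by positivity) (Gamma_pos_of_pos (by positivity)).ne']
  linarith [log_add_half_add_mul_log_half_le hu]

lemma log_Gamma_add_half_le {u : ℝ} (hu : 1 ≤ u) :
    log (Gamma (u + 1 / 2)) ≤ u * log (u / 2) + log π / 2 := by
  obtain ⟨v, hv, n, rfl⟩ : ∃ v ∈ Icc (1 : ℝ) 2, ∃ n : ℕ, u = v + n :=
    ⟨u - ⌊u - 1⌋₊, ⟨by linarith [Nat.floor_le (by linarith : 0 ≤ u - 1)],
      by linarith [Nat.lt_floor_add_one (u - 1)]⟩, ⌊u - 1⌋₊, by ring⟩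
  induction n with
  | zero => simpa using log_Gamma_add_half_le_of_mem_Icc hv
  | succ n ih =>
    have hn : (0 : ℝ) ≤ n := n.cast_nonneg
    push_cast
    rw [← add_assoc]
    exact log_Gamma_add_one_add_half_le (by linarith [hv.1]) (ih (by linarith [hv.1]))

theorem Gamma_add_half_le {u : ℝ} (hu : 1 ≤ u) : Gamma (u + 1 / 2) ≤ (u / 2) ^ u * √π := by
  have hΓ : 0 < Gamma (u + 1 / 2) := Gamma_pos_of_pos (by positivity)
  rw [← exp_log hΓ, ← exp_log (by positivity : 0 < (u / 2) ^ u * √π), exp_le_exp,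
    log_mul (by positivity) (by positivity), log_rpow (by positivity), log_sqrt pi_pos.le]
  exact log_Gamma_add_half_le hu

theorem stmt1 (q : ℝ) (hq : 2 ≤ q) :
    Real.Gamma ((q + 1) / 2) ≤ (q / 4) ^ (q / 2) * Real.sqrt Real.pi := by
  convert Gamma_add_half_le (u := q / 2) (by linarith) using 3 <;> ring
end

section
/- For every x > 0, the digamma function satisfies ψ(x) < log x − 1/(2x). -/
/-!
Put `f x = ψ x - log x + 1 / (2x)`. The recurrence `ψ (x + 1) = ψ x + 1 / x` and the strict
trapezoid inequality `log (1 + 1 / x) < (1 / x + 1 / (x + 1)) / 2` give `f x < f (x + 1)`.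
Log-convexity of `Γ` (Bohr–Mollerup) traps `ψ x` between the secant slopes `log (x - 1)` and
`log x`, so `f (x + n) → 0` and therefore `f x < 0`.
-/

open Real Set Filter Topology

lemma lt_of_forall_lt_add_one_of_tendsto {f : ℝ → ℝ} {x a : ℝ}
    (hf : ∀ y, x ≤ y → f y < f (y + 1)) (hlim : Tendsto f atTop (𝓝 a)) : f x < a := by
  have hmono : StrictMono fun n : ℕ => f (x + n) :=
    strictMono_nat_of_lt_succ fun n => by
      simpa [add_assoc] using hf (x + n) (le_add_of_nonneg_right n.cast_nonneg)
  have htends : Tendsto (fun n : ℕ => f (x + n)) atTop (𝓝 a) :=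
    hlim.comp (tendsto_atTop_add_const_left _ x tendsto_natCast_atTop_atTop)
  calc f x = f (x + (0 : ℕ)) := by simp
    _ < f (x + (1 : ℕ)) := hmono zero_lt_one
    _ ≤ a := hmono.monotone.ge_of_tendsto htends 1

namespace Real

/-- In powers of `t = 1 / (2a + 1)`, the series of `log (1 + 1 / a)` is dominated termwise by the
geometric series `2t / (1 - t²)`, which sums to the right-hand side. -/
lemma log_add_one_sub_log_lt {a : ℝ} (ha : 0 < a) :
    log (a + 1) - log a < (a⁻¹ + (a + 1)⁻¹) / 2 := by
  have hlog := hasSum_log_one_add_inv ha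
  set t : ℝ := 1 / (2 * a + 1) with ht
  clear_value t
  have ht0 : 0 < t := by rw [ht]; positivity
  have ht1 : t ^ 2 < 1 := by
    rw [sq_lt_one_iff₀ ht0.le, ht, div_lt_one (by positivity)]
    linarith
  have hgeom : HasSum (fun k : ℕ => 2 * t * (t ^ 2) ^ k) (2 * t * (1 - t ^ 2)⁻¹) :=
    (hasSum_geometric_of_lt_one (sq_nonneg t) ht1).mul_left (2 * t)
  have hlt := hasSum_lt (i := 1) (fun k => ?_) ?_ hlog hgeom
  · calc log (a + 1) - log a = log (1 + a⁻¹) := by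
          rw [← log_div (by positivity) ha.ne', add_div, div_self ha.ne', one_div]
      _ < 2 * t * (1 - t ^ 2)⁻¹ := hlt
      _ = (a⁻¹ + (a + 1)⁻¹) / 2 := by
          rw [ht, div_pow, one_pow, one_sub_div (by positivity),
            show (2 * a + 1) ^ 2 - 1 = 4 * a * (a + 1) by ring]
          field_simp
          ring
  · calc 2 * (1 / (2 * (k : ℝ) + 1)) * t ^ (2 * k + 1) ≤ 2 * 1 * t ^ (2 * k + 1) := by
          gcongr
          exact div_le_one_of_le₀ (by linarith [k.cast_nonneg (α := ℝ)]) (by positivity)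
      _ = 2 * t * (t ^ 2) ^ k := by ring
  · have : 0 < t ^ 3 := by positivity
    norm_num
    linarith

lemma differentiableAt_log_Gamma {x : ℝ} (hx : 0 < x) : DifferentiableAt ℝ (log ∘ Gamma) x :=
  (differentiableOn_Gamma_Ioi.differentiableAt (Ioi_mem_nhds hx)).log (Gamma_pos_of_pos hx).ne'

lemma logDeriv_Gamma_eq_deriv_log_Gamma {x : ℝ} (hx : 0 < x) :
    logDeriv Gamma x = deriv (log ∘ Gamma) x :=
  (deriv.log (differentiableOn_Gamma_Ioi.differentiableAt (Ioi_mem_nhds hx))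
    (Gamma_pos_of_pos hx).ne').symm

lemma log_Gamma_add_one {x : ℝ} (hx : 0 < x) : log (Gamma (x + 1)) = log x + log (Gamma x) := by
  rw [Gamma_add_one hx.ne', log_mul hx.ne' (Gamma_pos_of_pos hx).ne']

lemma logDeriv_Gamma_add_one {x : ℝ} (hx : 0 < x) :
    logDeriv Gamma (x + 1) = logDeriv Gamma x + x⁻¹ := by
  have heq : (fun y => (log ∘ Gamma) (y + 1)) =ᶠ[𝓝 x] fun y => (log ∘ Gamma) y + log y := by
    filter_upwards [lt_mem_nhds hx] with y hy
    simp only [Function.comp_apply, log_Gamma_add_one hy, add_comm]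
  rw [logDeriv_Gamma_eq_deriv_log_Gamma hx, logDeriv_Gamma_eq_deriv_log_Gamma (by positivity),
    ← deriv_comp_add_const, heq.deriv_eq,
    deriv_fun_add (differentiableAt_log_Gamma hx) (differentiableAt_log hx.ne'), deriv_log]

lemma logDeriv_Gamma_le_log {x : ℝ} (hx : 0 < x) : logDeriv Gamma x ≤ log x := by
  have := convexOn_log_Gamma.deriv_le_slope hx (by positivity : (0 : ℝ) < x + 1) (lt_add_one x)
    (differentiableAt_log_Gamma hx)
  rwa [slope_def_field, add_sub_cancel_left, div_one, Function.comp_apply, Function.comp_apply,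
    log_Gamma_add_one hx, add_sub_cancel_right, ← logDeriv_Gamma_eq_deriv_log_Gamma hx] at this

lemma log_sub_one_le_logDeriv_Gamma {x : ℝ} (hx : 1 < x) : log (x - 1) ≤ logDeriv Gamma x := by
  have hx0 : 0 < x - 1 := sub_pos.mpr hx
  have := convexOn_log_Gamma.slope_le_deriv hx0 (by positivity : (0 : ℝ) < x) (sub_one_lt x)
    (differentiableAt_log_Gamma (hx0.trans (sub_one_lt x)))
  have hrec := log_Gamma_add_one hx0
  rw [sub_add_cancel] at hrec
  rwa [slope_def_field, sub_sub_cancel, div_one, Function.comp_apply, Function.comp_apply,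
    hrec, add_sub_cancel_right, ← logDeriv_Gamma_eq_deriv_log_Gamma (by linarith)] at this

lemma tendsto_logDeriv_Gamma_sub_log_atTop :
    Tendsto (fun x => logDeriv Gamma x - log x) atTop (𝓝 0) := by
  have hlower : Tendsto (fun x => log (x - 1) - log x) atTop (𝓝 0) := by
    simpa only [← sub_eq_add_neg] using tendsto_log_comp_add_sub_log (-1)
  refine tendsto_of_tendsto_of_tendsto_of_le_of_le' hlower tendsto_const_nhds ?_ ?_
  · filter_upwards [eventually_gt_atTop 1] with x hx
    linarith [log_sub_one_le_logDeriv_Gamma hx]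
  · filter_upwards [eventually_gt_atTop 0] with x hx
    linarith [logDeriv_Gamma_le_log hx]

end Real

/-- The digamma inequality `ψ(x) < log x − 1/(2x)` for `x > 0`, where
`ψ = Γ'/Γ` is the logarithmic derivative of the Gamma function. -/
theorem stmt2 (x : ℝ) (hx : 0 < x) :
    deriv Real.Gamma x / Real.Gamma x < Real.log x - 1 / (2 * x) := by
  set f : ℝ → ℝ := fun y => logDeriv Gamma y - log y + (2 * y)⁻¹
  have hstep : ∀ y, x ≤ y → f y < f (y + 1) := by
    intro y hy
    have hy0 : 0 < y := hx.trans_le hy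
    have := log_add_one_sub_log_lt hy0
    simp only [f, logDeriv_Gamma_add_one hy0, mul_inv]
    linarith
  have hlim : Tendsto f atTop (𝓝 0) := by
    have hinv : Tendsto (fun y : ℝ => (2 * y)⁻¹) atTop (𝓝 0) :=
      tendsto_inv_atTop_zero.comp (tendsto_id.const_mul_atTop two_pos)
    simpa only [add_zero] using tendsto_logDeriv_Gamma_sub_log_atTop.add hinv
  have := lt_of_forall_lt_add_one_of_tendsto hstep hlim
  simp only [f, logDeriv_apply] at this
  rw [one_div]
  linarith
end

section
/- Let E be a Banach space. If the space P_w(ⁿE) of weakly continuous on bounded sets n-homogeneous polynomials on E is an M-summand in P(ⁿE), i.e. P(ⁿE) = P_w(ⁿE) ⊕_∞ Ĵ for some closed subspace Ĵ (meaning every P ∈ P(ⁿE) decomposes uniquely as P = Q + R with Q ∈ P_w(ⁿE), R ∈ Ĵ, and ‖P‖ = max(‖Q‖, ‖R‖)), then P_w(ⁿE) = P(ⁿE). -/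
open Filter Topology

universe u v

section PolyDefs

variable {E : Type u} [NormedAddCommGroup E] [NormedSpace ℝ E]

/-- `P` is a continuous `n`-homogeneous scalar polynomial on `E`. -/
def IsHomogPoly (n : ℕ) (P : E → ℝ) : Prop :=
  ∃ M : ContinuousMultilinearMap ℝ (fun _ : Fin n => E) ℝ, ∀ x, P x = M (fun _ => x)

/-- The polynomial (sup) norm: `‖P‖ = sup_{‖x‖ ≤ 1} |P x|`. -/
noncomputable def polyNorm (P : E → ℝ) : ℝ :=
  sSup {r : ℝ | ∃ x : E, ‖x‖ ≤ 1 ∧ r = |P x|}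

/-- A net is (norm) bounded. -/
def BoundedNet {ι : Type v} (x : ι → E) : Prop := ∃ C : ℝ, ∀ i, ‖x i‖ ≤ C

/-- The net `x` converges weakly to `x₀` along the filter `l`. -/
def WeaklyTendsto {ι : Type v} (x : ι → E) (l : Filter ι) (x₀ : E) : Prop :=
  ∀ γ : E →L[ℝ] ℝ, Tendsto (fun i => γ (x i)) l (𝓝 (γ x₀))

/-- `P` is weakly continuous on bounded sets at the point `x₀`. -/
def WCBat (P : E → ℝ) (x₀ : E) : Prop :=
  ∀ (ι : Type u) (l : Filter ι), l.NeBot → ∀ x : ι → E,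
    BoundedNet x → WeaklyTendsto x l x₀ → Tendsto (fun i => P (x i)) l (𝓝 (P x₀))

/-- `P ∈ P_w(ⁿE)`: continuous `n`-homogeneous and weakly continuous on bounded sets. -/
def WCB (n : ℕ) (P : E → ℝ) : Prop := IsHomogPoly n P ∧ ∀ x₀ : E, WCBat P x₀

/-- `P ∈ P_{w0}(ⁿE)`: weakly continuous on bounded sets at `0`. -/
def WCB0 (n : ℕ) (P : E → ℝ) : Prop := IsHomogPoly n P ∧ WCBat P 0

end PolyDefs

section AuxLemmas

variable {E : Type u} [NormedAddCommGroup E] [NormedSpace ℝ E]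

lemma homog_bddAbove {n : ℕ} {P : E → ℝ} (hP : IsHomogPoly n P) :
    BddAbove {r : ℝ | ∃ x : E, ‖x‖ ≤ 1 ∧ r = |P x|} := by
  obtain ⟨M, hM⟩ := hP
  refine ⟨‖M‖, ?_⟩
  rintro r ⟨x, hx, rfl⟩
  rw [hM]
  calc |M fun _ => x| ≤ ‖M‖ * ∏ _i : Fin n, ‖x‖ := M.le_opNorm _
    _ ≤ ‖M‖ * 1 := by
        refine mul_le_mul_of_nonneg_left ?_ (norm_nonneg M)
        simp only [Finset.prod_const, Finset.card_univ, Fintype.card_fin]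
        exact pow_le_one₀ (norm_nonneg x) hx
    _ = ‖M‖ := mul_one _

lemma le_polyNorm {n : ℕ} {P : E → ℝ} (hP : IsHomogPoly n P) {x : E} (hx : ‖x‖ ≤ 1) :
    |P x| ≤ polyNorm P :=
  le_csSup (homog_bddAbove hP) ⟨x, hx, rfl⟩

lemma polyNorm_le {P : E → ℝ} {C : ℝ} (hC : 0 ≤ C) (h : ∀ x : E, ‖x‖ ≤ 1 → |P x| ≤ C) :
    polyNorm P ≤ C :=
  Real.sSup_le (by rintro r ⟨x, hx, rfl⟩; exact h x hx) hC

/-- The powers of a continuous linear functional, scaled, are in `P_w(ⁿE)`. -/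
lemma wcb_pow (n : ℕ) (N : ℝ) (φ : E →L[ℝ] ℝ) :
    WCB n (fun v => N * (φ v) ^ n) := by
  constructor
  · refine ⟨N • ((ContinuousMultilinearMap.mkPiAlgebra ℝ (Fin n) ℝ).compContinuousLinearMap
      (fun _ => φ)), ?_⟩
    intro x
    simp [Finset.prod_const, smul_eq_mul]
  · intro x₀ ι l _ x _ hw
    exact ((hw φ).pow n).const_mul N

end AuxLemmas

/-- If `P_w(ⁿE)` is an M-summand in `P(ⁿE)`, then `P_w(ⁿE) = P(ⁿE)`. -/
theorem stmt4 {E : Type u} [NormedAddCommGroup E] [NormedSpace ℝ E] (n : ℕ)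
    (h : ∃ S : Set (E → ℝ),
      (∀ P ∈ S, IsHomogPoly n P) ∧
      (∀ P ∈ S, ∀ Q ∈ S, (fun x => P x + Q x) ∈ S) ∧
      (∀ c : ℝ, ∀ P ∈ S, (fun x => c * P x) ∈ S) ∧
      (∀ P : E → ℝ, IsHomogPoly n P →
        ∃! yz : (E → ℝ) × (E → ℝ), WCB n yz.1 ∧ yz.2 ∈ S ∧ P = fun x => yz.1 x + yz.2 x) ∧
      (∀ y : E → ℝ, WCB n y → ∀ z ∈ S,
        polyNorm (fun x => y x + z x) = max (polyNorm y) (polyNorm z))) :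
    ∀ P : E → ℝ, IsHomogPoly n P → WCB n P := by
  rcases Nat.eq_zero_or_pos n with hn | hn
  · -- degree 0: every polynomial is constant, hence in `P_w`.
    subst hn
    intro P hP
    obtain ⟨M, hMP⟩ := hP
    refine ⟨⟨M, hMP⟩, ?_⟩
    intro x₀ ι l _ x _ _
    have hconst : ∀ v : E, P v = P x₀ := by
      intro v
      rw [hMP, hMP]
      congr 1
      funext j
      exact j.elim0
    simp only [hconst]
    exact tendsto_const_nhds
  obtain ⟨S, hSpoly, _hadd, hsmul, hdec, hMnorm⟩ := h
  -- Key claim: every element of `S` is identically zero.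
  have hz0 : ∀ z ∈ S, ∀ x : E, z x = 0 := by
    intro z hzS x
    by_contra hzx
    obtain ⟨Mz, hMz⟩ := hSpoly z hzS
    -- x ≠ 0
    have hx0 : x ≠ 0 := by
      intro hx
      apply hzx
      rw [hx, hMz]
      exact Mz.map_coord_zero ⟨0, hn⟩ rfl
    -- normalize
    set u : E := ‖x‖⁻¹ • x with hu_def
    have hu_norm : ‖u‖ = 1 := norm_smul_inv_norm hx0
    have hzsmul : ∀ c : ℝ, ∀ v : E, z (c • v) = c ^ n * z v := by
      intro c v
      rw [hMz, hMz]
      have := Mz.map_smul_univ (fun _ : Fin n => c) (fun _ : Fin n => v)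
      simpa [Finset.prod_const, smul_eq_mul] using this
    have hzu : z u ≠ 0 := by
      rw [hu_def, hzsmul]
      exact mul_ne_zero (pow_ne_zero n (inv_ne_zero (norm_ne_zero_iff.mpr hx0))) hzx
    set a : ℝ := z u with ha_def
    set N : ℝ := polyNorm z with hN_def
    have haN : |a| ≤ N := le_polyNorm ⟨Mz, hMz⟩ hu_norm.le
    have haPos : 0 < |a| := abs_pos.mpr hzu
    have hNpos : 0 < N := lt_of_lt_of_le haPos haN
    -- Hahn-Banach functional at u
    have hu0 : u ≠ 0 := by
      intro hu
      rw [hu, norm_zero] at hu_norm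
      exact zero_ne_one hu_norm
    obtain ⟨φ, hφ_norm, hφ_u⟩ := exists_dual_vector ℝ u (norm_ne_zero_iff.mpr hu0)
    -- the wcb polynomial y = N * φ^n
    set y : E → ℝ := fun v => N * (φ v) ^ n with hy_def
    have hyWCB : WCB n y := wcb_pow n N φ
    -- sign-corrected z
    set s : ℝ := if 0 ≤ a then 1 else -1 with hs_def
    have hs_abs : |s| = 1 := by
      rw [hs_def]; split <;> simp
    have hsa : s * a = |a| := by
      rw [hs_def]
      split
      · rw [one_mul, abs_of_nonneg ‹_›]
      · rw [neg_one_mul, abs_of_neg (lt_of_not_ge ‹_›)]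
    set z' : E → ℝ := fun v => s * z v with hz'_def
    have hz'S : z' ∈ S := hsmul s z hzS
    have hz'_homog : IsHomogPoly n z' := hSpoly z' hz'S
    -- polyNorm z' = N
    have hz'_norm : polyNorm z' = N := by
      rw [hN_def]
      unfold polyNorm
      congr 1
      ext r
      constructor
      · rintro ⟨v, hv, rfl⟩; exact ⟨v, hv, by rw [hz'_def]; simp [abs_mul, hs_abs]⟩
      · rintro ⟨v, hv, rfl⟩; exact ⟨v, hv, by rw [hz'_def]; simp [abs_mul, hs_abs]⟩
    -- polyNorm y ≤ N
    have hy_norm : polyNorm y ≤ N := by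
      refine polyNorm_le hNpos.le ?_
      intro v hv
      rw [hy_def, abs_mul, abs_of_nonneg hNpos.le, abs_pow]
      have hφv : |φ v| ≤ 1 := by
        calc |φ v| = ‖φ v‖ := rfl
          _ ≤ ‖φ‖ * ‖v‖ := φ.le_opNorm v
          _ ≤ 1 := by rw [hφ_norm, one_mul]; exact hv
      calc N * |φ v| ^ n ≤ N * 1 := by
            exact mul_le_mul_of_nonneg_left (pow_le_one₀ (abs_nonneg _) hφv) hNpos.le
        _ = N := mul_one N
    -- M-summand equation
    have hMeq := hMnorm y hyWCB z' hz'S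
    -- lower bound of the LHS at u
    have hsum_homog : IsHomogPoly n (fun v => y v + z' v) := by
      obtain ⟨My, hMy⟩ := hyWCB.1
      obtain ⟨Mz', hMz'⟩ := hz'_homog
      exact ⟨My + Mz', fun v => by simp [hMy, hMz']⟩
    have hlb : N + |a| ≤ polyNorm (fun v => y v + z' v) := by
      have h1 : |y u + z' u| ≤ polyNorm (fun v => y v + z' v) :=
        le_polyNorm hsum_homog hu_norm.le
      have hφ_u1 : φ u = 1 := by rw [hφ_u, hu_norm]; norm_num
      have h2 : y u + z' u = N + |a| := by
        simp only [hy_def, hz'_def, hφ_u1, one_pow, mul_one]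
        rw [← ha_def, hsa]
      rw [h2] at h1
      exact (le_abs_self _).trans h1
    rw [hMeq, hz'_norm, max_eq_right hy_norm] at hlb
    linarith
  -- conclude
  intro P hP
  obtain ⟨⟨y, z⟩, ⟨hy, hzS, hPyz⟩, _⟩ := hdec P hP
  have hPy : P = y := by
    funext v
    rw [hPyz]
    simp [hz0 z hzS v]
  rw [hPy]
  exact hy
end

section
/- Let E, F be Banach spaces, n ≥ 2, and suppose F ⊆ E is a 1-complemented subspace (there is a norm-one projection π : E → F). If P_w(ⁿE) is an M-ideal in P(ⁿE), then P_w(ⁿF) is an M-ideal in P(ⁿF). -/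
open Filter Topology

universe u v

/-- `P_w(ⁿE)` is an M-ideal in `P(ⁿE)`, via the 3-ball property
([HWW, Theorem I.2.2 (iv)]). -/
def PolyMIdeal (n : ℕ) (E : Type u) [NormedAddCommGroup E] [NormedSpace ℝ E] : Prop :=
  ∀ P₁ P₂ P₃ Q : E → ℝ, WCB n P₁ → WCB n P₂ → WCB n P₃ →
    polyNorm P₁ ≤ 1 → polyNorm P₂ ≤ 1 → polyNorm P₃ ≤ 1 →
    IsHomogPoly n Q → polyNorm Q ≤ 1 → ∀ ε : ℝ, 0 < ε →
    ∃ P : E → ℝ, WCB n P ∧ polyNorm (fun x => Q x + P₁ x - P x) ≤ 1 + ε ∧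
      polyNorm (fun x => Q x + P₂ x - P x) ≤ 1 + ε ∧
      polyNorm (fun x => Q x + P₃ x - P x) ≤ 1 + ε

/-! Pull `P₁, P₂, P₃, Q` back to `E` along the norm-one projection, solve the 3-ball problem
there, and restrict the solution to `F`: on `F` the projection is the identity, so the
restricted differences are restrictions of the differences on `E`, and restricting to the
smaller unit ball does not increase the sup norm. -/

lemma polyNorm_le_of_forall {E : Type u} [NormedAddCommGroup E] {P : E → ℝ} {b : ℝ}
    (h : ∀ x : E, ‖x‖ ≤ 1 → |P x| ≤ b) : polyNorm P ≤ b := by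
  refine csSup_le ⟨|P 0|, 0, by simp, rfl⟩ ?_
  rintro r ⟨x, hx, rfl⟩
  exact h x hx

section Retract

variable {E G : Type u} [NormedAddCommGroup E] [NormedSpace ℝ E]
  [NormedAddCommGroup G] [NormedSpace ℝ G] {n : ℕ}

namespace IsHomogPoly

lemma abs_le_polyNorm {P : E → ℝ} (hP : IsHomogPoly n P) {x : E} (hx : ‖x‖ ≤ 1) :
    |P x| ≤ polyNorm P := by
  obtain ⟨M, hM⟩ := hP
  have hbdd : BddAbove {r : ℝ | ∃ x : E, ‖x‖ ≤ 1 ∧ r = |P x|} := by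
    refine ⟨‖M‖, ?_⟩
    rintro r ⟨y, hy, rfl⟩
    rw [hM, ← Real.norm_eq_abs]
    exact M.unit_le_opNorm ((pi_norm_le_iff_of_nonneg zero_le_one).2 fun _ => hy)
  exact le_csSup hbdd ⟨x, hx, rfl⟩

lemma comp {P : E → ℝ} (hP : IsHomogPoly n P) (T : G →L[ℝ] E) :
    IsHomogPoly n (fun x => P (T x)) := by
  obtain ⟨M, hM⟩ := hP
  exact ⟨M.compContinuousLinearMap fun _ => T, fun x => by simp [hM]⟩

lemma add_sub {A B C : E → ℝ} (hA : IsHomogPoly n A) (hB : IsHomogPoly n B)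
    (hC : IsHomogPoly n C) : IsHomogPoly n (fun x => A x + B x - C x) := by
  obtain ⟨MA, hMA⟩ := hA
  obtain ⟨MB, hMB⟩ := hB
  obtain ⟨MC, hMC⟩ := hC
  exact ⟨MA + MB - MC, fun x => by simp [hMA, hMB, hMC]⟩

lemma polyNorm_comp_le {P : E → ℝ} (hP : IsHomogPoly n P) (T : G →L[ℝ] E) (hT : ‖T‖ ≤ 1) :
    polyNorm (fun x => P (T x)) ≤ polyNorm P :=
  polyNorm_le_of_forall fun x hx =>
    hP.abs_le_polyNorm ((T.le_of_opNorm_le hT x).trans (by simpa using hx))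

end IsHomogPoly

lemma WCB.comp {P : E → ℝ} (hP : WCB n P) (T : G →L[ℝ] E) : WCB n (fun x => P (T x)) := by
  refine ⟨hP.1.comp T, fun x₀ ι l hl x ⟨C, hC⟩ hx => ?_⟩
  have hTx : BoundedNet fun i => T (x i) :=
    ⟨‖T‖ * C, fun i => (T.le_opNorm _).trans (by gcongr; exact hC i)⟩
  exact hP.2 (T x₀) ι l hl _ hTx fun γ => hx (γ.comp T)

theorem PolyMIdeal.of_retract (i : G →L[ℝ] E) (r : E →L[ℝ] G) (hri : ∀ y, r (i y) = y)
    (hi : ‖i‖ ≤ 1) (hr : ‖r‖ ≤ 1) (hE : PolyMIdeal n E) : PolyMIdeal n G := by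
  intro P₁ P₂ P₃ Q h₁ h₂ h₃ hb₁ hb₂ hb₃ hQ hbQ ε hε
  obtain ⟨P, hP, c₁, c₂, c₃⟩ :=
    hE _ _ _ _ (h₁.comp r) (h₂.comp r) (h₃.comp r)
      ((h₁.1.polyNorm_comp_le r hr).trans hb₁) ((h₂.1.polyNorm_comp_le r hr).trans hb₂)
      ((h₃.1.polyNorm_comp_le r hr).trans hb₃) (hQ.comp r)
      ((hQ.polyNorm_comp_le r hr).trans hbQ) ε hε
  have restrict : ∀ A : G → ℝ, IsHomogPoly n A →
      polyNorm (fun x => Q (r x) + A (r x) - P x) ≤ 1 + ε →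
      polyNorm (fun y => Q y + A y - P (i y)) ≤ 1 + ε := by
    intro A hA hc
    have h := ((hQ.comp r).add_sub (hA.comp r) hP.1).polyNorm_comp_le i hi
    simp only [hri] at h
    exact h.trans hc
  exact ⟨fun y => P (i y), hP.comp i, restrict P₁ h₁.1 c₁, restrict P₂ h₂.1 c₂,
    restrict P₃ h₃.1 c₃⟩

end Retract

theorem stmt5_general {E : Type u} [NormedAddCommGroup E] [NormedSpace ℝ E]
    (F : Submodule ℝ E) (n : ℕ)
    (π : E →L[ℝ] E) (hnorm : ‖π‖ = 1)
    (hmem : ∀ x : E, π x ∈ F) (hfix : ∀ y ∈ F, π y = y)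
    (hE : PolyMIdeal n E) :
    PolyMIdeal n ↥F :=
  hE.of_retract F.subtypeL (π.codRestrict F hmem) (fun y => Subtype.ext (hfix y y.2))
    F.norm_subtypeL_le
    (π.opNorm_le_bound zero_le_one fun x => by
      simpa [hnorm] using π.le_opNorm x)

/-- If `F` is a 1-complemented subspace of `E` and `P_w(ⁿE)` is an M-ideal in `P(ⁿE)`,
then `P_w(ⁿF)` is an M-ideal in `P(ⁿF)`. -/
theorem stmt5 {E : Type u} [NormedAddCommGroup E] [NormedSpace ℝ E]
    (F : Submodule ℝ E) (n : ℕ) (hn : 2 ≤ n)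
    (π : E →L[ℝ] E) (hproj : ∀ x, π (π x) = π x) (hnorm : ‖π‖ = 1)
    (hmem : ∀ x : E, π x ∈ F) (hfix : ∀ y ∈ F, π y = y)
    (hE : PolyMIdeal n E) :
    PolyMIdeal n ↥F :=
  stmt5_general F n π hnorm hmem hfix hE
end

section
/- Let E be a Banach space, n ≥ 2, P ∈ P(ⁿE), γ ∈ E*, and k ≥ 1. If P is not weakly continuous on bounded sets at a point x ≠ 0 and γ ∈ E* satisfies γ(x) ≠ 0, then the (n+k)-homogeneous polynomial Q = γ^k · P is weakly continuous on bounded sets at 0 but not weakly continuous on bounded sets (i.e. Q ∈ P_{w0}(^{n+k}E) \ P_w(^{n+k}E)). -/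
open Filter Topology

universe u v

section Aux

variable {E : Type u} [NormedAddCommGroup E] [NormedSpace ℝ E]

lemma isHomogPoly_mul_step (γ : E →L[ℝ] ℝ) {n : ℕ} {P : E → ℝ}
    (h : IsHomogPoly n P) : IsHomogPoly (n + 1) (fun z => γ z * P z) := by
  obtain ⟨M, hM⟩ := h
  refine ⟨(γ.smulRight M).uncurryLeft, fun z => ?_⟩
  have : (γ.smulRight M).uncurryLeft (fun _ => z) = γ z * M (fun _ => z) := by
    simp [ContinuousLinearMap.uncurryLeft_apply]; left; rfl
  show γ z * P z = _
  rw [this, hM]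

lemma isHomogPoly_pow_mul (γ : E →L[ℝ] ℝ) (n k : ℕ) {P : E → ℝ}
    (h : IsHomogPoly n P) : IsHomogPoly (n + k) (fun z => (γ z) ^ k * P z) := by
  induction k with
  | zero => simpa using h
  | succ k ih =>
    have h1 : IsHomogPoly (n + k + 1) (fun z => γ z * ((γ z) ^ k * P z)) :=
      isHomogPoly_mul_step γ ih
    have heq : (fun z => (γ z) ^ (k + 1) * P z)
        = fun z => γ z * ((γ z) ^ k * P z) := by
      funext z; ring
    rw [heq]
    exact h1

end Aux

/-- If `P` is not weakly continuous on bounded sets at `x ≠ 0` and `γ(x) ≠ 0`, then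
`Q = γ^k · P` belongs to `P_{w0}(^{n+k}E) \ P_w(^{n+k}E)`. -/
theorem stmt10 {E : Type u} [NormedAddCommGroup E] [NormedSpace ℝ E]
    (n k : ℕ) (hn : 2 ≤ n) (hk : 1 ≤ k)
    (P : E → ℝ) (hP : IsHomogPoly n P) (γ : E →L[ℝ] ℝ) (x : E) (hx : x ≠ 0)
    (hγx : γ x ≠ 0) (hnw : ¬ WCBat P x) :
    WCB0 (n + k) (fun z => (γ z) ^ k * P z) ∧ ¬ WCB (n + k) (fun z => (γ z) ^ k * P z) := by
  have hk0 : k ≠ 0 := by omega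
  obtain ⟨M, hM⟩ := hP
  constructor
  · refine ⟨isHomogPoly_pow_mul γ n k ⟨M, hM⟩, ?_⟩
    intro ι l hl xs hb hw
    obtain ⟨C, hC⟩ := hb
    -- the limit value is 0
    have h0 : (γ (0 : E)) ^ k * P 0 = 0 := by
      simp [zero_pow hk0]
    show Tendsto (fun i => (γ (xs i)) ^ k * P (xs i)) l (𝓝 ((γ (0:E)) ^ k * P 0))
    rw [h0]
    -- bound for |P (xs i)|
    have hPbound : ∀ i, |P (xs i)| ≤ ‖M‖ * (max C 0) ^ n := by
      intro i
      have h1 : ‖M (fun _ : Fin n => xs i)‖ ≤ ‖M‖ * ∏ _j : Fin n, ‖xs i‖ :=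
        M.le_opNorm _
      have h2 : (∏ _j : Fin n, ‖xs i‖) = ‖xs i‖ ^ n := by
        simp [Finset.prod_const]
      rw [hM]
      calc ‖M (fun _ : Fin n => xs i)‖ ≤ ‖M‖ * ‖xs i‖ ^ n := by rw [h2] at h1; exact h1
        _ ≤ ‖M‖ * (max C 0) ^ n :=
            mul_le_mul_of_nonneg_left
              (pow_le_pow_left₀ (norm_nonneg _) (le_trans (hC i) (le_max_left _ _)) n)
              (norm_nonneg M)
    -- squeeze
    have hγ0 : Tendsto (fun i => γ (xs i)) l (𝓝 0) := by
      have := hw γ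
      simpa using this
    have hg : Tendsto (fun i => |γ (xs i)| ^ k * (‖M‖ * (max C 0) ^ n)) l (𝓝 0) := by
      have h1 : Tendsto (fun i => |γ (xs i)|) l (𝓝 0) := by
        simpa using hγ0.abs
      have h2 : Tendsto (fun i => |γ (xs i)| ^ k) l (𝓝 0) := by
        simpa [zero_pow hk0] using h1.pow k
      simpa using h2.mul_const (‖M‖ * (max C 0) ^ n)
    refine squeeze_zero_norm (fun i => ?_) hg
    have : ‖(γ (xs i)) ^ k * P (xs i)‖ = |γ (xs i)| ^ k * |P (xs i)| := by
      rw [Real.norm_eq_abs, abs_mul, abs_pow]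
    rw [this]
    have habs : (0:ℝ) ≤ |γ (xs i)| ^ k := by positivity
    exact mul_le_mul_of_nonneg_left (hPbound i) habs
  · rintro ⟨-, hQw⟩
    -- extract a witnessing net for the failure of WCBat P x
    unfold WCBat at hnw
    push_neg at hnw
    obtain ⟨ι, l, hl, xs, hb, hw, hnt⟩ := hnw
    apply hnt
    have hQ : Tendsto (fun i => (γ (xs i)) ^ k * P (xs i)) l (𝓝 ((γ x) ^ k * P x)) :=
      hQw x ι l hl xs hb hw
    have hγ : Tendsto (fun i => γ (xs i)) l (𝓝 (γ x)) := hw γ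
    have hγk : Tendsto (fun i => (γ (xs i)) ^ k) l (𝓝 ((γ x) ^ k)) := hγ.pow k
    have hne : (γ x) ^ k ≠ 0 := pow_ne_zero _ hγx
    have hdiv : Tendsto (fun i => ((γ (xs i)) ^ k * P (xs i)) / (γ (xs i)) ^ k) l
        (𝓝 (((γ x) ^ k * P x) / (γ x) ^ k)) := hQ.div hγk hne
    have hlim : ((γ x) ^ k * P x) / (γ x) ^ k = P x := by
      field_simp
    rw [hlim] at hdiv
    -- eventually γ (xs i) ≠ 0, hence the quotient equals P (xs i)
    have hev : ∀ᶠ i in l, (γ (xs i)) ^ k ≠ 0 := by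
      have : ∀ᶠ i in l, γ (xs i) ≠ 0 := hγ.eventually_ne hγx
      filter_upwards [this] with i hi
      exact pow_ne_zero _ hi
    refine hdiv.congr' ?_
    filter_upwards [hev] with i hi
    field_simp
end

section
/- Let E be a Banach space and suppose (S_α) is a bounded net of continuous linear operators on E with S_α*γ → γ in norm for every γ ∈ E*. Then for every n-homogeneous polynomial P ∈ P_w(ⁿE) weakly continuous on bounded sets, ‖P − P∘S_α‖ → 0. -/
/-!
Write `Δ_{h₁} ⋯ Δ_{h_k} P` for iterated forward differences; for an `n`-homogeneous polynomial
they vanish identically once `k > n`. Since `P x - P (S_α x) = Δ_{h_α} P (S_α x)` with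
`h_α = x - S_α x`, and `|γ h_α| ≤ ‖γ ∘ S_α - γ‖` uniformly on the unit ball, it suffices that
`Δ_{h_ν} P (y_ν) → 0` whenever `y_ν` is bounded and the directions `h_ν` are bounded and weakly
null. This is proved by downward induction on the number of directions. If it failed along an
ultrafilter `U`, every `γ (y_ν)` converges along `U`, so `d = y_ν - y_β` is weakly null as first
`β → U` and then `ν → U`. Along this iterated limit
`Δ_d Δ_{h_ν} P (y_β) = Δ_{h_ν} P (y_ν) - Δ_{h_ν} P (y_β)` has one more weakly null direction, while
for each fixed `β` the last term tends to `0` by weak continuity of `P` at `y_β`.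
-/

open Filter Topology

universe u v

open Finset fwdDiff

section IteratedForwardDifference

variable {M G : Type*} [AddCommMonoid M] [AddCommGroup G]

def iterFwdDiff : {k : ℕ} → (Fin k → M) → (M → G) → M → G
  | 0, _ => id
  | _ + 1, h => fwdDiff (h 0) ∘ iterFwdDiff (Fin.tail h)

theorem iterFwdDiff_zero (h : Fin 0 → M) (f : M → G) : iterFwdDiff h f = f := rfl

theorem iterFwdDiff_succ {k : ℕ} (h : Fin (k + 1) → M) (f : M → G) :
    iterFwdDiff h f = Δ_[h 0] (iterFwdDiff (Fin.tail h) f) := rfl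

theorem iterFwdDiff_cons_apply {k : ℕ} (a : M) (h : Fin k → M) (f : M → G) (x : M) :
    iterFwdDiff (Fin.cons a h : Fin (k + 1) → M) f x =
      iterFwdDiff h f (x + a) - iterFwdDiff h f x := rfl

theorem fwdDiff_comm (a b : M) (f : M → G) : Δ_[a] (Δ_[b] f) = Δ_[b] (Δ_[a] f) := by
  ext x
  simp only [fwdDiff, add_right_comm x a b]
  abel

theorem iterFwdDiff_fwdDiff {k : ℕ} (h : Fin k → M) (a : M) (f : M → G) :
    iterFwdDiff h (Δ_[a] f) = Δ_[a] (iterFwdDiff h f) := by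
  induction k with
  | zero => rfl
  | succ k ih => rw [iterFwdDiff_succ, iterFwdDiff_succ, ih, fwdDiff_comm]

theorem iterFwdDiff_succ' {k : ℕ} (h : Fin (k + 1) → M) (f : M → G) :
    iterFwdDiff h f = iterFwdDiff (Fin.tail h) (Δ_[h 0] f) := by
  rw [iterFwdDiff_succ, iterFwdDiff_fwdDiff]

theorem iterFwdDiff_finsetSum {α : Type*} {k : ℕ} (h : Fin k → M) (s : Finset α)
    (f : α → M → G) : iterFwdDiff h (∑ i ∈ s, f i) = ∑ i ∈ s, iterFwdDiff h (f i) := by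
  induction k with
  | zero => rfl
  | succ k ih => simp only [iterFwdDiff_succ, ih, fwdDiff_finsetSum]

end IteratedForwardDifference

namespace MultilinearMap

variable {R E G : Type*} [Semiring R] [AddCommGroup E] [Module R E] [AddCommGroup G] [Module R G]

theorem fwdDiff_diag {n : ℕ} (f : MultilinearMap R (fun _ : Fin n => E) G) (a : E) :
    Δ_[a] (fun x => f fun _ => x) =
      ∑ s ∈ univ.erase univ, fun x => f.restr s rfl a fun _ => x := by
  ext x
  have restr_const (s : Finset (Fin n)) :
      f.restr s rfl a (fun _ => x) = f (s.piecewise (fun _ => x) fun _ => a) := by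
    simp only [restr, coe_mk, dite_eq_ite]
    rfl
  have := f.map_add_univ (fun _ => x) (fun _ => a)
  simp only [Pi.add_def] at this
  rw [Finset.sum_apply, Finset.sum_erase_eq_sub (mem_univ _)]
  simp only [fwdDiff, this, restr_const, Finset.piecewise_univ]

theorem iterFwdDiff_diag_eq_zero {n k : ℕ} (f : MultilinearMap R (fun _ : Fin n => E) G)
    (hk : n < k) (h : Fin k → E) : iterFwdDiff h (fun x => f fun _ => x) = 0 := by
  induction n using Nat.strong_induction_on generalizing k with
  | _ n ih =>
    obtain ⟨k, rfl⟩ : ∃ k', k = k' + 1 := ⟨k - 1, by omega⟩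
    rw [iterFwdDiff_succ', fwdDiff_diag, iterFwdDiff_finsetSum]
    refine Finset.sum_eq_zero fun s hs => ?_
    have : #s < n := by
      simpa using (Finset.card_lt_iff_ne_univ _).2 (Finset.ne_of_mem_erase hs)
    exact ih _ this _ (by omega) _

end MultilinearMap

theorem Filter.NeBot.curry {α β : Type*} {f : Filter α} {g : Filter β} (hf : f.NeBot)
    (hg : g.NeBot) : (f.curry g).NeBot :=
  (frequently_true_iff_neBot _).1
    ((frequently_curry_iff _).2 (by simp [frequently_true_iff_neBot, hf, hg]))

section Nets

variable {E : Type*} [NormedAddCommGroup E] {τ : Type*}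

theorem BoundedNet.comp {σ : Type*} {x : τ → E} (hx : BoundedNet x) (g : σ → τ) :
    BoundedNet fun i => x (g i) :=
  let ⟨C, hC⟩ := hx
  ⟨C, fun i => hC (g i)⟩

theorem BoundedNet.add {x y : τ → E} (hx : BoundedNet x) (hy : BoundedNet y) :
    BoundedNet fun ν => x ν + y ν :=
  let ⟨C, hC⟩ := hx
  let ⟨D, hD⟩ := hy
  ⟨C + D, fun ν => (norm_add_le _ _).trans (add_le_add (hC ν) (hD ν))⟩

theorem BoundedNet.sub {x y : τ → E} (hx : BoundedNet x) (hy : BoundedNet y) :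
    BoundedNet fun ν => x ν - y ν :=
  let ⟨C, hC⟩ := hx
  let ⟨D, hD⟩ := hy
  ⟨C + D, fun ν => (norm_sub_le _ _).trans (add_le_add (hC ν) (hD ν))⟩

end Nets

section WeakNets

variable {E : Type*} [NormedAddCommGroup E] [NormedSpace ℝ E] {τ : Type*}

theorem WeaklyTendsto.add {F : Filter τ} {x y : τ → E} {a b : E} (hx : WeaklyTendsto x F a)
    (hy : WeaklyTendsto y F b) : WeaklyTendsto (fun ν => x ν + y ν) F (a + b) := fun γ => by
  simpa only [map_add] using (hx γ).add (hy γ)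

theorem BoundedNet.weaklyTendsto_sub_prod {y : τ → E} (hy : BoundedNet y) (U : Ultrafilter τ) :
    WeaklyTendsto (fun p : τ × τ => y p.2 - y p.1) ((U : Filter τ) ×ˢ U) 0 := by
  intro γ
  obtain ⟨C, hC⟩ := hy
  have hbd : ∀ ν, γ (y ν) ∈ Set.Icc (-(‖γ‖ * C)) (‖γ‖ * C) := fun ν =>
    abs_le.1 ((γ.le_opNorm _).trans (by gcongr; exact hC ν))
  obtain ⟨a, -, ha⟩ := isCompact_Icc.ultrafilter_le_nhds (U.map fun ν => γ (y ν))
    (le_principal_iff.2 (mem_map.2 (univ_mem' hbd)))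
  have ha : Tendsto (fun ν => γ (y ν)) U (𝓝 a) := ha
  simpa using (ha.comp tendsto_snd).sub (ha.comp tendsto_fst)

theorem weaklyTendsto_self_sub_apply {ι : Type*} {l : Filter ι} {S : ι → E →L[ℝ] E}
    (hS : ∀ γ : E →L[ℝ] ℝ, Tendsto (fun i => ‖γ.comp (S i) - γ‖) l (𝓝 0)) {x : ι → E}
    (hx : ∀ i, ‖x i‖ ≤ 1) : WeaklyTendsto (fun i => x i - S i (x i)) l 0 := by
  intro γ
  rw [map_zero]
  refine squeeze_zero_norm (fun i => ?_) (hS γ)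
  calc ‖γ (x i - S i (x i))‖ = ‖(γ.comp (S i) - γ) (x i)‖ := by simp [norm_sub_rev]
    _ ≤ ‖γ.comp (S i) - γ‖ * ‖x i‖ := ContinuousLinearMap.le_opNorm _ _
    _ ≤ ‖γ.comp (S i) - γ‖ := mul_le_of_le_one_right (norm_nonneg _) (hx i)

theorem WCBat.tendsto_comp {P : E → ℝ} {x₀ : E} (hP : WCBat P x₀) {F : Filter τ} {x : τ → E}
    (hb : BoundedNet x) (hw : WeaklyTendsto x F x₀) :
    Tendsto (fun ν => P (x ν)) F (𝓝 (P x₀)) := by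
  obtain ⟨C, hC⟩ := hb
  rcases F.eq_or_neBot with rfl | hF
  · exact tendsto_bot
  let m : τ → Metric.closedBall (0 : E) C := fun ν => ⟨x ν, by simpa using hC ν⟩
  have := hP _ (F.map m) inferInstance (fun e => e.1) ⟨C, fun e => mem_closedBall_zero_iff.1 e.2⟩
    fun γ => tendsto_map'_iff.2 (hw γ)
  exact tendsto_map'_iff.1 this

theorem WCBat.tendsto_iterFwdDiff {P : E → ℝ} {y : E} (hP : WCBat P y) {F : Filter τ} {k : ℕ}
    {x : τ → E} {h : τ → Fin k → E} (hxb : BoundedNet x) (hx : WeaklyTendsto x F y)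
    (hhb : ∀ j, BoundedNet fun ν => h ν j) (hh : ∀ j, WeaklyTendsto (fun ν => h ν j) F 0) :
    Tendsto (fun ν => iterFwdDiff (h ν) P (x ν)) F (𝓝 (iterFwdDiff (0 : Fin k → E) P y)) := by
  induction k generalizing x with
  | zero => exact hP.tendsto_comp hxb hx
  | succ k ih =>
    have hxh : WeaklyTendsto (fun ν => x ν + h ν 0) F y := by simpa using hx.add (hh 0)
    have tail {x : τ → E} (hxb : BoundedNet x) (hx : WeaklyTendsto x F y) :=
      ih (h := fun ν => Fin.tail (h ν)) hxb hx (fun j => hhb j.succ) (fun j => hh j.succ)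
    simpa [iterFwdDiff_succ, fwdDiff] using (tail (hxb.add (hhb 0)) hxh).sub (tail hxb hx)

end WeakNets

section Main

variable {E : Type*} [NormedAddCommGroup E] [NormedSpace ℝ E]

theorem tendsto_iterFwdDiff_of_tendsto_succ {P : E → ℝ} (hP : ∀ x, WCBat P x) {τ : Type*}
    {F : Filter τ} {k : ℕ} {y : τ → E} {h : τ → Fin (k + 1) → E} (hy : BoundedNet y)
    (hhb : ∀ j, BoundedNet fun ν => h ν j) (hh : ∀ j, WeaklyTendsto (fun ν => h ν j) F 0)
    (hsucc : ∀ (G : Filter (τ × τ)) (d : τ × τ → Fin (k + 2) → E),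
      (∀ j, BoundedNet fun p => d p j) → (∀ j, WeaklyTendsto (fun p => d p j) G 0) →
      Tendsto (fun p => iterFwdDiff (d p) P (y p.1)) G (𝓝 0)) :
    Tendsto (fun ν => iterFwdDiff (h ν) P (y ν)) F (𝓝 0) := by
  by_contra hD
  obtain ⟨ε, hε, hfreq⟩ : ∃ ε > 0, ∃ᶠ ν in F, ε ≤ |iterFwdDiff (h ν) P (y ν)| := by
    simpa [Metric.tendsto_nhds, Filter.not_eventually] using hD
  obtain ⟨U, hU⟩ := exists_ultrafilter_iff.2 (frequently_iff_neBot.1 hfreq)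
  have hUF : (U : Filter τ) ≤ F := hU.trans inf_le_left
  have hbad : ∀ᶠ ν in (U : Filter τ), ε ≤ |iterFwdDiff (h ν) P (y ν)| :=
    hU.trans inf_le_right (mem_principal_self _)
  have hhU (j) : WeaklyTendsto (fun ν => h ν j) U 0 := fun γ => (hh j γ).mono_left hUF
  let G := (U : Filter τ).curry (U : Filter τ)
  have : G.NeBot := U.neBot.curry U.neBot
  -- `Δ_d Δ_h P (y β) = Δ_h P (y ν) - Δ_h P (y β)` for the direction `d = y ν - y β`.
  let d : τ × τ → Fin (k + 2) → E := fun p => Fin.cons (y p.2 - y p.1) (h p.2)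
  have hdb (j) : BoundedNet fun p => d p j := by
    refine Fin.cases ?_ (fun j => ?_) j
    · exact (hy.comp Prod.snd).sub (hy.comp Prod.fst)
    · exact (hhb j).comp Prod.snd
  have hd (j) : WeaklyTendsto (fun p => d p j) G 0 := by
    refine Fin.cases (fun γ => ?_) (fun j γ => ?_) j
    · exact (hy.weaklyTendsto_sub_prod U γ).mono_left curry_le_prod
    · exact (hhU j γ).comp (tendsto_snd.mono_left curry_le_prod)
  have hbase (β : τ) : Tendsto (fun ν => iterFwdDiff (h ν) P (y β)) U (𝓝 0) := by
    simpa [iterFwdDiff_succ, fwdDiff] using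
      (hP (y β)).tendsto_iterFwdDiff ⟨‖y β‖, fun _ => le_rfl⟩ (fun _ => tendsto_const_nhds) hhb hhU
  have h1 : ∀ᶠ p in G, ε ≤ |iterFwdDiff (h p.2) P (y p.2)| :=
    eventually_curry_iff.2 (.of_forall fun _ => hbad)
  have h2 : ∀ᶠ p in G, |iterFwdDiff (h p.2) P (y p.1)| < ε / 2 :=
    eventually_curry_iff.2 (.of_forall fun β =>
      (hbase β).abs.eventually_lt_const (by simpa using half_pos hε))
  have h3 : ∀ᶠ p in G, |iterFwdDiff (d p) P (y p.1)| < ε / 2 :=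
    (hsucc G d hdb hd).abs.eventually_lt_const (by simpa using half_pos hε)
  obtain ⟨p, h1, h2, h3⟩ := (h1.and (h2.and h3)).exists
  rw [iterFwdDiff_cons_apply, add_sub_cancel] at h3
  linarith [abs_sub_abs_le_abs_sub (iterFwdDiff (h p.2) P (y p.2))
    (iterFwdDiff (h p.2) P (y p.1))]

theorem tendsto_iterFwdDiff_of_weaklyNull {P : E → ℝ} (hP : ∀ x, WCBat P x) {n : ℕ}
    (hvan : ∀ k, n < k → ∀ h : Fin k → E, iterFwdDiff h P = 0) {τ : Type*} {F : Filter τ}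
    {k : ℕ} {y : τ → E} {h : τ → Fin (k + 1) → E} (hy : BoundedNet y)
    (hhb : ∀ j, BoundedNet fun ν => h ν j) (hh : ∀ j, WeaklyTendsto (fun ν => h ν j) F 0) :
    Tendsto (fun ν => iterFwdDiff (h ν) P (y ν)) F (𝓝 0) := by
  induction hm : n - k generalizing k τ with
  | zero =>
    simp only [hvan (k + 1) (by omega)]
    exact tendsto_const_nhds
  | succ m ih =>
    refine tendsto_iterFwdDiff_of_tendsto_succ hP hy hhb hh fun G d hdb hd => ?_
    exact ih (hy.comp Prod.fst) hdb hd (by omega)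

end Main

theorem tendsto_polyNorm_zero {E : Type*} [NormedAddCommGroup E] {ι : Type*} {l : Filter ι}
    {f : ι → E → ℝ}
    (hf : ∀ x : ι → E, (∀ i, ‖x i‖ ≤ 1) → Tendsto (fun i => f i (x i)) l (𝓝 0)) :
    Tendsto (fun i => polyNorm (f i)) l (𝓝 0) := by
  rw [Metric.tendsto_nhds]
  intro ε hε
  have hpick (i : ι) : ∃ x : E, ‖x‖ ≤ 1 ∧ ∀ z, ‖z‖ ≤ 1 → ε / 2 < |f i z| → ε / 2 < |f i x| := by
    by_cases hi : ∃ z : E, ‖z‖ ≤ 1 ∧ ε / 2 < |f i z|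
    · obtain ⟨z, hz, hfz⟩ := hi
      exact ⟨z, hz, fun _ _ _ => hfz⟩
    · push Not at hi
      exact ⟨0, by simp, fun z hz hfz => absurd (hi z hz) (not_le.2 hfz)⟩
  choose x hx hbad using hpick
  filter_upwards [(hf x hx).abs.eventually_lt_const
    (show |(0 : ℝ)| < ε / 2 by simpa using half_pos hε)] with i hi
  have hle : polyNorm (f i) ≤ ε / 2 := Real.sSup_le (by
    rintro r ⟨z, hz, rfl⟩
    exact not_lt.1 fun hfz => (hbad i z hz hfz).not_gt hi) (by positivity)
  have hnn : 0 ≤ polyNorm (f i) := Real.sSup_nonneg (by rintro r ⟨z, -, rfl⟩; positivity)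
  rw [Real.dist_0_eq_abs, abs_of_nonneg hnn]
  linarith

theorem stmt11_general {E : Type u} [NormedAddCommGroup E] [NormedSpace ℝ E]
    (n : ℕ) {ι : Type v} (l : Filter ι)
    (S : ι → E →L[ℝ] E) (hb : ∃ C : ℝ, ∀ i, ‖S i‖ ≤ C)
    (hadj : ∀ γ : E →L[ℝ] ℝ, Tendsto (fun i => ‖γ.comp (S i) - γ‖) l (𝓝 0))
    (P : E → ℝ) (hP : WCB n P) :
    Tendsto (fun i => polyNorm (fun x => P x - P (S i x))) l (𝓝 0) := by
  obtain ⟨⟨M, hM⟩, hwc⟩ := hP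
  have hvan (k : ℕ) (hk : n < k) (h : Fin k → E) : iterFwdDiff h P = 0 := by
    rw [funext hM]
    exact M.toMultilinearMap.iterFwdDiff_diag_eq_zero hk h
  obtain ⟨C, hC⟩ := hb
  refine tendsto_polyNorm_zero fun x hx => ?_
  have hSx : BoundedNet fun i => S i (x i) := ⟨C, fun i =>
    ((S i).le_opNorm _).trans ((mul_le_of_le_one_right (norm_nonneg _) (hx i)).trans (hC i))⟩
  have := tendsto_iterFwdDiff_of_weaklyNull hwc hvan (k := 0) (h := fun i _ => x i - S i (x i))
      hSx (fun _ => BoundedNet.sub ⟨1, hx⟩ hSx) (fun _ => weaklyTendsto_self_sub_apply hadj hx)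
  simp only [iterFwdDiff_succ, iterFwdDiff_zero] at this
  simpa [fwdDiff] using this

/-- If `(S_α)` is a bounded net of operators with `S_α* γ → γ` for all `γ ∈ E*`, then
`‖P − P∘S_α‖ → 0` for every `P ∈ P_w(ⁿE)`. -/
theorem stmt11 {E : Type u} [NormedAddCommGroup E] [NormedSpace ℝ E]
    (n : ℕ) {ι : Type v} (l : Filter ι) [l.NeBot]
    (S : ι → E →L[ℝ] E) (hb : ∃ C : ℝ, ∀ i, ‖S i‖ ≤ C)
    (hadj : ∀ γ : E →L[ℝ] ℝ, Tendsto (fun i => ‖γ.comp (S i) - γ‖) l (𝓝 0))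
    (P : E → ℝ) (hP : WCB n P) :
    Tendsto (fun i => polyNorm (fun x => P x - P (S i x))) l (𝓝 0) :=
  stmt11_general n l S hb hadj P hP
end

section
/- Let E be a Banach space, n ≥ 2, and assume every k-homogeneous continuous polynomial on E with 1 ≤ k < n is weakly continuous on bounded sets. Let P ∈ P(ⁿE) with ‖P‖ = 1 have the following norm-attainment-up-to-ε property: for each ε > 0 there is z_ε ∈ B_E with |P(z_ε)| ≥ 1 − ε (in the complex case one may take P(z_ε) = 1 − ε after rotation). Then P has property (M): for all λ ∈ 𝕂, v ∈ E with |λ| ≤ ‖v‖ⁿ, and every bounded weakly null net (x_α), one has limsup_α |λ + P(x_α)| ≤ limsup_α ‖v + x_α‖ⁿ, provided E has the linear property (M). (This is the case ‖P‖ = 1 of: if E has property (M) and n = cd(E), then E has the n-polynomial property (M).) -/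
/-!
Write `A = limsup ‖v + xᵢ‖`. Because the lower-degree polynomials are weakly continuous on
bounded sets, the mixed terms of `P (u + xᵢ)` vanish, so `P xᵢ ≈ P (u + xᵢ) - P u` for every
`u`. Taking `u = ‖v‖ • w` with `w` in the unit ball nearly attaining `s = sup_B P`, property (M)
gives `limsup ‖u + xᵢ‖ ≤ A`, hence `limsup P xᵢ ≤ s (Aⁿ - ‖v‖ⁿ) ≤ Aⁿ - ‖v‖ⁿ`, where
`‖v‖ ≤ A` is the weak lower semicontinuity of the norm. The same bound for `-P` controls
`|P xᵢ|`, and then `|λ + P xᵢ| ≤ |λ| + |P xᵢ|` with `|λ| ≤ ‖v‖ⁿ` gives the claim.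
-/

open Filter Topology

universe u v

variable {E : Type u} [NormedAddCommGroup E] [NormedSpace ℝ E]

/-- Kalton's property (M) for the Banach space `E`. -/
def PropertyM (E : Type u) [NormedAddCommGroup E] [NormedSpace ℝ E] : Prop :=
  ∀ y v : E, ‖y‖ ≤ ‖v‖ → ∀ (ι : Type u) (l : Filter ι), l.NeBot → ∀ x : ι → E,
    BoundedNet x → WeaklyTendsto x l 0 →
    limsup (fun i => ‖y + x i‖) l ≤ limsup (fun i => ‖v + x i‖) l

open Metric

theorem MultilinearMap.map_diag_add {R M N ι : Type*} [CommSemiring R] [AddCommMonoid M]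
    [AddCommMonoid N] [Module R M] [Module R N] [Fintype ι] [DecidableEq ι] [Nonempty ι]
    (f : MultilinearMap R (fun _ : ι => M) N) (x y : M) :
    f (fun _ => x + y) = f (fun _ => x) + f (fun _ => y) +
      ∑ S ∈ (Finset.univ.erase ∅).erase Finset.univ, f (S.piecewise (fun _ => x) (fun _ => y)) := by
  have huniv : Finset.univ ∈ (Finset.univ : Finset (Finset ι)).erase ∅ :=
    Finset.mem_erase.mpr ⟨Finset.univ_nonempty.ne_empty, Finset.mem_univ _⟩
  have h := f.map_add_univ (fun _ => x) (fun _ => y)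
  rw [← Finset.add_sum_erase _ _ (Finset.mem_univ ∅), ← Finset.add_sum_erase _ _ huniv] at h
  rwa [Finset.piecewise_empty, Finset.piecewise_univ, add_left_comm, ← add_assoc] at h

theorem BoundedNet.isBoundedUnder_norm_add {F ι : Type*} [NormedAddCommGroup F] {x : ι → F}
    (hx : BoundedNet x) (l : Filter ι) (y : F) : IsBoundedUnder (· ≤ ·) l (fun i => ‖y + x i‖) := by
  obtain ⟨C, hC⟩ := hx
  exact isBoundedUnder_of ⟨‖y‖ + C, fun i => (norm_add_le _ _).trans (by gcongr; exact hC i)⟩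

theorem WeaklyTendsto.norm_le_limsup_norm_add {ι : Type*} {l : Filter ι} [l.NeBot]
    {x : ι → E} (hw : WeaklyTendsto x l 0) (hx : BoundedNet x) (v : E) :
    ‖v‖ ≤ limsup (fun i => ‖v + x i‖) l := by
  obtain ⟨γ, hγ, hγv⟩ := exists_dual_vector'' ℝ v
  have hlim : Tendsto (fun i => γ (v + x i)) l (𝓝 ‖v‖) := by
    simpa [hγv] using (hw γ).const_add (γ v)
  have hγ_le : ∀ i, γ (v + x i) ≤ ‖v + x i‖ := fun i =>
    (Real.le_norm_self _).trans ((γ.le_of_opNorm_le hγ _).trans_eq (one_mul _))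
  calc ‖v‖ = limsup (fun i => γ (v + x i)) l := hlim.limsup_eq.symm
    _ ≤ limsup (fun i => ‖v + x i‖) l :=
      limsup_le_limsup (.of_forall hγ_le) hlim.isBoundedUnder_ge.isCoboundedUnder_le
        (hx.isBoundedUnder_norm_add l v)

theorem Real.limsup_pow_of_nonneg {ι : Type*} {l : Filter ι} [l.NeBot] {f : ι → ℝ}
    (hf : ∀ i, 0 ≤ f i) (hb : IsBoundedUnder (· ≤ ·) l f) (n : ℕ) :
    limsup f l ^ n = limsup (fun i => f i ^ n) l := by
  have hmono : Monotone fun t : ℝ => max t 0 ^ n := fun a b hab =>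
    pow_le_pow_left₀ (le_max_right _ _) (max_le_max_right 0 hab) n
  have hlim0 : 0 ≤ limsup f l := le_limsup_of_frequently_le (.of_forall hf) hb
  calc limsup f l ^ n = max (limsup f l) 0 ^ n := by rw [max_eq_left hlim0]
    _ = limsup ((fun t : ℝ => max t 0 ^ n) ∘ f) l :=
      hmono.map_limsup_of_continuousAt f (by fun_prop) hb (isCoboundedUnder_le_of_le l hf)
    _ = limsup (fun i => f i ^ n) l := by simp only [Function.comp_def, max_eq_left (hf _)]

namespace IsHomogPoly

variable {n : ℕ} {Q : E → ℝ} {ι : Type u} {l : Filter ι} [l.NeBot] {x : ι → E}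

theorem map_smul (hQ : IsHomogPoly n Q) (c : ℝ) (w : E) : Q (c • w) = c ^ n * Q w := by
  obtain ⟨M, hM⟩ := hQ
  simpa [hM, smul_eq_mul] using M.map_smul_univ (fun _ => c) (fun _ => w)

theorem map_zero (hQ : IsHomogPoly n Q) (hn : n ≠ 0) : Q 0 = 0 := by
  simpa [zero_pow hn] using hQ.map_smul 0 0

theorem neg (hQ : IsHomogPoly n Q) : IsHomogPoly n (fun y => -Q y) := by
  obtain ⟨M, hM⟩ := hQ
  exact ⟨-M, fun y => by simp [hM]⟩

theorem le_mul_norm_pow (hQ : IsHomogPoly n Q) (hn : n ≠ 0) {s : ℝ}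
    (hs : ∀ w, ‖w‖ ≤ 1 → Q w ≤ s) (w : E) : Q w ≤ s * ‖w‖ ^ n := by
  rcases eq_or_ne w 0 with rfl | hw
  · simp [hQ.map_zero hn, zero_pow hn]
  · have hw' : ‖w‖ ≠ 0 := norm_ne_zero_iff.mpr hw
    have hunit : ‖‖w‖⁻¹ • w‖ = 1 := by
      rw [norm_smul, norm_inv, norm_norm, inv_mul_cancel₀ hw']
    calc Q w = ‖w‖ ^ n * Q (‖w‖⁻¹ • w) := by rw [← hQ.map_smul, smul_inv_smul₀ hw']
      _ ≤ ‖w‖ ^ n * s := by gcongr; exact hs _ hunit.le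
      _ = s * ‖w‖ ^ n := mul_comm _ _

theorem abs_le_polyNorm_s15 (hQ : IsHomogPoly n Q) {w : E} (hw : ‖w‖ ≤ 1) : |Q w| ≤ polyNorm Q := by
  obtain ⟨M, hM⟩ := hQ
  refine le_csSup ⟨‖M‖, ?_⟩ ⟨w, hw, rfl⟩
  rintro r ⟨y, hy, rfl⟩
  calc |Q y| = ‖M fun _ => y‖ := by rw [hM, Real.norm_eq_abs]
    _ ≤ ‖M‖ * ∏ _ : Fin n, ‖y‖ := M.le_opNorm _
    _ ≤ ‖M‖ * 1 := by gcongr; exact Finset.prod_le_one (fun _ _ => norm_nonneg y) fun _ _ => hy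
    _ = ‖M‖ := mul_one _

theorem tendsto_map_add_sub (hQ : IsHomogPoly n Q) (hn : n ≠ 0)
    (hlow : ∀ k, 1 ≤ k → k < n → ∀ R : E → ℝ, IsHomogPoly k R → WCBat R 0)
    (hx : BoundedNet x) (hw : WeaklyTendsto x l 0) (u : E) :
    Tendsto (fun i => Q (u + x i) - Q u - Q (x i)) l (𝓝 0) := by
  classical
  obtain ⟨M, hM⟩ := hQ
  have : Nonempty (Fin n) := ⟨⟨0, Nat.pos_of_ne_zero hn⟩⟩
  have hmixed : ∀ S ∈ (Finset.univ.erase ∅).erase Finset.univ,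
      Tendsto (fun i => M (S.piecewise (fun _ => x i) (fun _ => u))) l (𝓝 0) := by
    intro S hS
    -- the mixed term is a `#S`-homogeneous polynomial in `x i`, with `1 ≤ #S < n`
    obtain ⟨hS_univ, hS_empty⟩ := Finset.mem_erase.mp hS
    have hpos : 1 ≤ S.card :=
      Finset.card_pos.mpr (Finset.nonempty_iff_ne_empty.mpr (Finset.ne_of_mem_erase hS_empty))
    have hlt : S.card < n := by
      simpa using Finset.card_lt_card (Finset.ssubset_univ_iff.mpr hS_univ)
    have hR := hlow S.card hpos hlt _ ⟨M.restr S rfl u, fun _ => rfl⟩ ι l ‹_› x hx hw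
    rwa [(M.restr S rfl u).map_coord_zero (⟨0, hpos⟩ : Fin S.card) rfl] at hR
  have hsplit : ∀ i, Q (u + x i) - Q u - Q (x i) =
      ∑ S ∈ (Finset.univ.erase ∅).erase Finset.univ,
        M (S.piecewise (fun _ => x i) (fun _ => u)) := by
    intro i
    have h := M.toMultilinearMap.map_diag_add (x i) u
    simp only [ContinuousMultilinearMap.coe_coe] at h
    rw [hM, hM, hM, add_comm u, h]
    ring
  simpa [hsplit] using tendsto_finsetSum _ hmixed

theorem eventually_le_of_isLUB_closedBall (hQ : IsHomogPoly n Q) (hn : n ≠ 0) (hM : PropertyM E)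
    (hlow : ∀ k, 1 ≤ k → k < n → ∀ R : E → ℝ, IsHomogPoly k R → WCBat R 0)
    (hx : BoundedNet x) (hw : WeaklyTendsto x l 0) {s : ℝ}
    (hs : IsLUB (Q '' closedBall 0 1) s) (v : E) {ε : ℝ} (hε : 0 < ε) :
    ∀ᶠ i in l, Q (x i) ≤ s * (limsup (fun i => ‖v + x i‖) l + ε) ^ n - (s - ε) * ‖v‖ ^ n + ε := by
  set A := limsup (fun i => ‖v + x i‖) l
  obtain ⟨_, ⟨w, hw1, rfl⟩, hQw, -⟩ := hs.exists_between (sub_lt_self s hε)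
  set v' := ‖v‖ • w
  have hv' : ‖v'‖ ≤ ‖v‖ := by
    rw [norm_smul, norm_norm]
    exact mul_le_of_le_one_right (norm_nonneg v) (mem_closedBall_zero_iff.mp hw1)
  have hQv' : (s - ε) * ‖v‖ ^ n ≤ Q v' := by
    rw [hQ.map_smul, mul_comm]
    gcongr
  have hQs : ∀ y, Q y ≤ s * ‖y‖ ^ n :=
    hQ.le_mul_norm_pow hn fun y hy => hs.1 ⟨y, mem_closedBall_zero_iff.mpr hy, rfl⟩
  have hs0 : 0 ≤ s := hs.1 ⟨0, mem_closedBall_self zero_le_one, hQ.map_zero hn⟩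
  have hnear : ∀ᶠ i in l, ‖v' + x i‖ < A + ε :=
    eventually_lt_of_limsup_lt ((hM v' v hv' ι l ‹_› x hx hw).trans_lt (lt_add_of_pos_right A hε))
      (hx.isBoundedUnder_norm_add l v')
  have hsplit : ∀ᶠ i in l, -ε < Q (v' + x i) - Q v' - Q (x i) :=
    (tendsto_order.1 (hQ.tendsto_map_add_sub hn hlow hx hw v')).1 _ (neg_lt_zero.mpr hε)
  filter_upwards [hnear, hsplit] with i hi hi'
  have : s * ‖v' + x i‖ ^ n ≤ s * (A + ε) ^ n := by gcongr
  linarith [hQs (v' + x i)]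

theorem eventually_le_limsup_pow_sub_norm_pow (hQ : IsHomogPoly n Q) (hn : n ≠ 0)
    (hM : PropertyM E)
    (hlow : ∀ k, 1 ≤ k → k < n → ∀ R : E → ℝ, IsHomogPoly k R → WCBat R 0)
    (hx : BoundedNet x) (hw : WeaklyTendsto x l 0) (hQ1 : ∀ w : E, ‖w‖ ≤ 1 → Q w ≤ 1)
    (v : E) {δ : ℝ} (hδ : 0 < δ) :
    ∀ᶠ i in l, Q (x i) ≤ limsup (fun i => ‖v + x i‖) l ^ n - ‖v‖ ^ n + δ := by
  set A := limsup (fun i => ‖v + x i‖) l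
  set s := sSup (Q '' closedBall 0 1)
  have hQ1' : 1 ∈ upperBounds (Q '' closedBall 0 1) := by
    rintro _ ⟨w, hw1, rfl⟩
    exact hQ1 w (mem_closedBall_zero_iff.mp hw1)
  have hs : IsLUB (Q '' closedBall 0 1) s :=
    isLUB_csSup ((nonempty_closedBall.mpr zero_le_one).image Q) ⟨1, hQ1'⟩
  have hvA : ‖v‖ ^ n ≤ A ^ n := by
    gcongr
    exact hw.norm_le_limsup_norm_add hx v
  have hbound : Tendsto (fun ε => s * (A + ε) ^ n - (s - ε) * ‖v‖ ^ n + ε) (𝓝[>] 0)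
      (𝓝 (s * (A ^ n - ‖v‖ ^ n))) := by
    have hcont : Continuous fun ε => s * (A + ε) ^ n - (s - ε) * ‖v‖ ^ n + ε := by fun_prop
    simpa [mul_sub] using hcont.continuousWithinAt (s := Set.Ioi 0) (x := 0) |>.tendsto
  have hlt : s * (A ^ n - ‖v‖ ^ n) < A ^ n - ‖v‖ ^ n + δ := by
    have := mul_le_of_le_one_left (sub_nonneg.mpr hvA) (hs.2 hQ1')
    linarith
  obtain ⟨ε, hε_bound, hε⟩ := ((hbound.eventually (gt_mem_nhds hlt)).and self_mem_nhdsWithin).exists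
  filter_upwards [hQ.eventually_le_of_isLUB_closedBall hn hM hlow hx hw hs v hε] with i hi
  exact hi.trans hε_bound.le

end IsHomogPoly

theorem stmt15_general (n : ℕ) (hn : 2 ≤ n)
    (hlow : ∀ k : ℕ, 1 ≤ k → k < n → ∀ R : E → ℝ, IsHomogPoly k R → WCB k R)
    (hM : PropertyM E)
    (P : E → ℝ) (hP : IsHomogPoly n P) (hPnorm : polyNorm P = 1) :
    ∀ (lam : ℝ) (v : E), |lam| ≤ ‖v‖ ^ n →
      ∀ (ι : Type u) (l : Filter ι), l.NeBot → ∀ x : ι → E, BoundedNet x →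
        WeaklyTendsto x l 0 →
        limsup (fun i => |lam + P (x i)|) l ≤ limsup (fun i => ‖v + x i‖ ^ n) l := by
  intro lam v hlam ι l hl x hx hw
  have hn0 : n ≠ 0 := by omega
  have hlow0 : ∀ k, 1 ≤ k → k < n → ∀ R : E → ℝ, IsHomogPoly k R → WCBat R 0 :=
    fun k hk hkn R hR => (hlow k hk hkn R hR).2 0
  have hP1 : ∀ w : E, ‖w‖ ≤ 1 → |P w| ≤ 1 := fun w hw1 => hPnorm ▸ hP.abs_le_polyNorm_s15 hw1
  set A := limsup (fun i => ‖v + x i‖) l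
  have hbound : ∀ δ > 0, ∀ᶠ i in l, |lam + P (x i)| ≤ A ^ n + δ := by
    intro δ hδ
    filter_upwards
      [hP.eventually_le_limsup_pow_sub_norm_pow hn0 hM hlow0 hx hw
        (fun w hw1 => (le_abs_self _).trans (hP1 w hw1)) v hδ,
      hP.neg.eventually_le_limsup_pow_sub_norm_pow hn0 hM hlow0 hx hw
        (fun w hw1 => (neg_le_abs _).trans (hP1 w hw1)) v hδ] with i hi hi'
    have hPx : |P (x i)| ≤ A ^ n - ‖v‖ ^ n + δ := abs_le.mpr ⟨by linarith, hi⟩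
    linarith [abs_add_le lam (P (x i))]
  calc limsup (fun i => |lam + P (x i)|) l ≤ A ^ n := le_of_forall_pos_le_add fun δ hδ =>
        limsup_le_of_le (isCoboundedUnder_le_of_le l fun _ => abs_nonneg _) (hbound δ hδ)
    _ = limsup (fun i => ‖v + x i‖ ^ n) l :=
      Real.limsup_pow_of_nonneg (fun _ => norm_nonneg _) (hx.isBoundedUnder_norm_add l v) n

/-- If `E` has property (M), every `k`-homogeneous polynomial with `k < n` is weakly
continuous on bounded sets, and `P` has norm one and almost attains it, then `P` has the
polynomial property (M). -/
theorem stmt15 (n : ℕ) (hn : 2 ≤ n)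
    (hlow : ∀ k : ℕ, 1 ≤ k → k < n → ∀ R : E → ℝ, IsHomogPoly k R → WCB k R)
    (hM : PropertyM E)
    (P : E → ℝ) (hP : IsHomogPoly n P) (hPnorm : polyNorm P = 1)
    (hatt : ∀ ε : ℝ, 0 < ε → ∃ z : E, ‖z‖ ≤ 1 ∧ 1 - ε ≤ |P z|) :
    ∀ (lam : ℝ) (v : E), |lam| ≤ ‖v‖ ^ n →
      ∀ (ι : Type u) (l : Filter ι), l.NeBot → ∀ x : ι → E, BoundedNet x →
        WeaklyTendsto x l 0 →
        limsup (fun i => |lam + P (x i)|) l ≤ limsup (fun i => ‖v + x i‖ ^ n) l :=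
  stmt15_general n hn hlow hM P hP hPnorm
end
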